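/- arXiv:math/0311413 — 3 statements merged into one kernel-verified Lean document; each statement's English description precedes it below -/
import Mathlib

section
/- Let q be a real number with -1 < q < 1, and let n, p, m, u be natural numbers with m ≤ n and u ≤ p. Then there exists a constant C (depending on q, n, p, m, u but not on k) such that for every integer k ≥ max(m,u), √([k+n-2m]_q! · [k+p-2u]_q! · [k]_q! · [k-m]_q!) / ([k-m]_q! · [k-u]_q!) ≤ C. -/
/-- The `q`-integer `[n]_q = ∑_{i=0}^{n-1} q^i`. -/
noncomputable def qInt (q : ℝ) (n : ℕ) : ℝ := ∑ i ∈ Finset.range n, q ^ i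

/-- The `q`-factorial `[n]_q! = ∏_{k=1}^{n} [k]_q`, with `[0]_q! = 1`. -/
noncomputable def qFact (q : ℝ) (n : ℕ) : ℝ := ∏ k ∈ Finset.range n, qInt q (k + 1)

private lemma qInt_lb {q : ℝ} (hq : |q| < 1) (j : ℕ) :
    (1 - |q|) / (1 - q) ≤ qInt q (j + 1) := by
  have habs := abs_lt.mp hq
  have h1 : (0:ℝ) < 1 - q := by linarith [habs.2]
  have hne : q ≠ 1 := by intro h; rw [h] at hq; simp at hq
  have hpow : q ^ (j + 1) ≤ |q| := by
    calc q ^ (j + 1) ≤ |q ^ (j + 1)| := le_abs_self _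
      _ = |q| ^ (j + 1) := abs_pow q _
      _ ≤ |q| ^ 1 := pow_le_pow_of_le_one (abs_nonneg q) hq.le (by omega)
      _ = |q| := pow_one _
  have heq : qInt q (j + 1) = (1 - q ^ (j + 1)) / (1 - q) := by
    rw [qInt, geom_sum_eq hne, ← neg_div_neg_eq]; ring_nf
  rw [heq, ← sub_nonneg, div_sub_div_same]
  exact div_nonneg (by linarith) h1.le

private lemma qInt_ub {q : ℝ} (hq : |q| < 1) (j : ℕ) :
    qInt q j ≤ (1 - |q|)⁻¹ := by
  have h1 : (0:ℝ) < 1 - |q| := by linarith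
  have hne : |q| ≠ 1 := by linarith
  calc qInt q j ≤ ∑ i ∈ Finset.range j, |q| ^ i := by
        refine Finset.sum_le_sum fun i _ => ?_
        calc q ^ i ≤ |q ^ i| := le_abs_self _
          _ = |q| ^ i := abs_pow q i
    _ = (1 - |q| ^ j) / (1 - |q|) := by rw [geom_sum_eq hne, ← neg_div_neg_eq]; ring_nf
    _ ≤ 1 / (1 - |q|) := by
        rw [← sub_nonneg, div_sub_div_same]
        exact div_nonneg (by nlinarith [pow_nonneg (abs_nonneg q) j]) h1.le
    _ = (1 - |q|)⁻¹ := one_div _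

theorem qFact_uniform_ratio_bound (q : ℝ) (hq : -1 < q ∧ q < 1)
    (n p m u : ℕ) (hm : m ≤ n) (hu : u ≤ p) :
    ∃ C : ℝ, ∀ k : ℕ, max m u ≤ k →
      Real.sqrt (qFact q (k + n - 2 * m) * qFact q (k + p - 2 * u) *
          qFact q k * qFact q (k - m)) /
        (qFact q (k - m) * qFact q (k - u)) ≤ C := by
  have hqa : |q| < 1 := abs_lt.mpr ⟨hq.1, hq.2⟩
  set a : ℝ := (1 - |q|) / (1 - q) with ha_def
  set b : ℝ := (1 - |q|)⁻¹ with hb_def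
  have hq1 : (0:ℝ) < 1 - q := by linarith [hq.2]
  have ha : 0 < a := div_pos (by linarith) hq1
  have ha1 : a ≤ 1 := by
    rw [ha_def, div_le_one hq1]
    rcases abs_cases q with ⟨h, _⟩ | ⟨h, _⟩ <;> linarith
  have hb1 : (1:ℝ) ≤ b := by
    rw [hb_def, le_inv_comm₀ one_pos (by linarith)]; simp [abs_nonneg q]
  have hb0 : (0:ℝ) < b := by linarith
  have hainv : (1:ℝ) ≤ a⁻¹ := (one_le_inv₀ ha).mpr ha1
  -- basic bounds for qInt
  have hIlb : ∀ j : ℕ, a ≤ qInt q (j + 1) := fun j => qInt_lb hqa j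
  have hIub : ∀ j : ℕ, qInt q (j + 1) ≤ b := fun j => qInt_ub hqa (j + 1)
  -- positivity and telescoping bounds for qFact
  have hFpos : ∀ N : ℕ, 0 < qFact q N := fun N =>
    Finset.prod_pos fun j _ => lt_of_lt_of_le ha (hIlb j)
  have hFsplit : ∀ M d : ℕ, qFact q (M + d) =
      qFact q M * ∏ i ∈ Finset.range d, qInt q (M + i + 1) := by
    intro M d
    rw [qFact, Finset.prod_range_add]
    congr 1
  have hFub : ∀ M d : ℕ, qFact q (M + d) ≤ qFact q M * b ^ d := by
    intro M d
    rw [hFsplit M d]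
    refine mul_le_mul_of_nonneg_left ?_ (hFpos M).le
    calc (∏ i ∈ Finset.range d, qInt q (M + i + 1))
        ≤ ∏ _i ∈ Finset.range d, b :=
          Finset.prod_le_prod (fun i _ => (ha.trans_le (hIlb _)).le)
            (fun i _ => hIub _)
      _ = b ^ d := by rw [Finset.prod_const, Finset.card_range]
  have hFlb : ∀ M d : ℕ, qFact q M * a ^ d ≤ qFact q (M + d) := by
    intro M d
    rw [hFsplit M d]
    refine mul_le_mul_of_nonneg_left ?_ (hFpos M).le
    calc a ^ d = ∏ _i ∈ Finset.range d, a := by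
          rw [Finset.prod_const, Finset.card_range]
      _ ≤ ∏ i ∈ Finset.range d, qInt q (M + i + 1) :=
          Finset.prod_le_prod (fun i _ => ha.le) (fun i _ => hIlb _)
  -- the constant
  set R : ℝ := b ^ (m + u) * (a⁻¹) ^ (m + u) with hR_def
  have hainv0 : (0:ℝ) ≤ a⁻¹ := inv_nonneg.mpr ha.le
  have hR1 : (1:ℝ) ≤ R := by
    calc (1:ℝ) = 1 * 1 := by ring
      _ ≤ b ^ (m + u) * a⁻¹ ^ (m + u) :=
        mul_le_mul (one_le_pow₀ hb1) (one_le_pow₀ hainv) zero_le_one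
          (pow_nonneg hb0.le _)
  set K : ℝ := b ^ (n - m) * b ^ (p - u) * b ^ m * R with hK_def
  have hK0 : 0 ≤ K := mul_nonneg (mul_nonneg (mul_nonneg (pow_nonneg hb0.le _)
    (pow_nonneg hb0.le _)) (pow_nonneg hb0.le _)) (zero_le_one.trans hR1)
  refine ⟨Real.sqrt K, fun k hk => ?_⟩
  have hmk : m ≤ k := le_trans (le_max_left m u) hk
  have huk : u ≤ k := le_trans (le_max_right m u) hk
  have hA : k + n - 2 * m = (k - m) + (n - m) := by omega
  have hB : k + p - 2 * u = (k - u) + (p - u) := by omega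
  have hkeq : k = (k - m) + m := by omega
  have hAle : qFact q (k + n - 2 * m) ≤ qFact q (k - m) * b ^ (n - m) := by
    rw [hA]; exact hFub _ _
  have hBle : qFact q (k + p - 2 * u) ≤ qFact q (k - u) * b ^ (p - u) := by
    rw [hB]; exact hFub _ _
  have hkle : qFact q k ≤ qFact q (k - m) * b ^ m := by
    conv_lhs => rw [hkeq]
    exact hFub _ _
  have hRle : qFact q (k - m) ≤ qFact q (k - u) * R := by
    rcases le_total u m with hum | hmu
    · -- k - u = (k - m) + (m - u)
      have h1 : k - u = (k - m) + (m - u) := by omega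
      have h2 := hFlb (k - m) (m - u)
      rw [← h1] at h2
      have h3 : qFact q (k - m) ≤ qFact q (k - u) * (a⁻¹) ^ (m - u) := by
        rw [inv_pow, ← div_eq_mul_inv, le_div_iff₀ (pow_pos ha _)]
        exact h2
      refine h3.trans (mul_le_mul_of_nonneg_left ?_ (hFpos _).le)
      calc (a⁻¹) ^ (m - u) ≤ (a⁻¹) ^ (m + u) := pow_le_pow_right₀ hainv (by omega)
        _ ≤ R := by
          rw [hR_def]
          nlinarith [one_le_pow₀ (n := m + u) hb1, pow_nonneg hainv0 (m + u)]
    · have h1 : k - m = (k - u) + (u - m) := by omega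
      rw [h1]
      refine (hFub _ _).trans ?_
      refine mul_le_mul_of_nonneg_left ?_ (hFpos _).le
      calc b ^ (u - m) ≤ b ^ (m + u) := pow_le_pow_right₀ hb1 (by omega)
        _ ≤ R := by
          rw [hR_def]
          nlinarith [one_le_pow₀ (n := m + u) hainv, pow_nonneg hb0.le (m + u)]
  -- put it together
  set F := qFact q
  set D : ℝ := F (k - m) * F (k - u) with hD_def
  have hD : 0 < D := mul_pos (hFpos _) (hFpos _)
  have hP : F (k + n - 2 * m) * F (k + p - 2 * u) * F k * F (k - m) ≤ D ^ 2 * K := by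
    have step : F (k + n - 2 * m) * F (k + p - 2 * u) * F k * F (k - m) ≤
        (F (k - m) * b ^ (n - m)) * (F (k - u) * b ^ (p - u)) *
          (F (k - m) * b ^ m) * (F (k - u) * R) := by
      have n1 : (0:ℝ) ≤ F (k + p - 2 * u) := (hFpos _).le
      have n2 : (0:ℝ) ≤ F k := (hFpos _).le
      have n3 : (0:ℝ) ≤ F (k - m) := (hFpos _).le
      have m1 : (0:ℝ) ≤ F (k - m) * b ^ (n - m) :=
        mul_nonneg (hFpos _).le (pow_nonneg hb0.le _)
      have m2 : (0:ℝ) ≤ F (k - m) * b ^ (n - m) * (F (k - u) * b ^ (p - u)) :=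
        mul_nonneg m1 (mul_nonneg (hFpos _).le (pow_nonneg hb0.le _))
      have m3 : (0:ℝ) ≤ F (k - m) * b ^ (n - m) * (F (k - u) * b ^ (p - u)) *
          (F (k - m) * b ^ m) :=
        mul_nonneg m2 (mul_nonneg (hFpos _).le (pow_nonneg hb0.le _))
      exact mul_le_mul (mul_le_mul (mul_le_mul hAle hBle n1 m1) hkle n2 m2) hRle n3 m3
    refine step.trans_eq ?_
    rw [hD_def, hK_def]; ring
  have hsqrt : Real.sqrt (F (k + n - 2 * m) * F (k + p - 2 * u) * F k * F (k - m)) ≤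
      D * Real.sqrt K := by
    calc Real.sqrt (F (k + n - 2 * m) * F (k + p - 2 * u) * F k * F (k - m))
        ≤ Real.sqrt (D ^ 2 * K) := Real.sqrt_le_sqrt hP
      _ = D * Real.sqrt K := by
          rw [Real.sqrt_mul (sq_nonneg D), Real.sqrt_sq hD.le]
  rw [div_le_iff₀ hD]
  linarith [hsqrt]
end

section
/- Let n and k be natural numbers with k ≤ n. Call a permutation α of {1,…,n} block-increasing if α is strictly increasing on {1,…,n-k} and strictly increasing on {n-k+1,…,n}. Then the map (α, β, γ) ↦ α ∘ (β ⊕ γ), where α is block-increasing, β ∈ S_{n-k}, γ ∈ S_k, and β ⊕ γ denotes the block-diagonal permutation acting as β on the first n-k positions and as γ on the last k positions, is a bijection onto S_n, and moreover inv(α ∘ (β ⊕ γ)) = inv(α) + inv(β) + inv(γ). -/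
/-- The number of inversions of a permutation `σ` of `{0, …, n-1}`:
the number of pairs `(i, j)` with `i < j` and `σ j < σ i`. -/
def inversions {n : ℕ} (σ : Equiv.Perm (Fin n)) : ℕ :=
  (Finset.univ.filter fun p : Fin n × Fin n => p.1 < p.2 ∧ σ p.2 < σ p.1).card

/-- A permutation of `{0, …, n-1}` is block-increasing (with respect to the splitting into the
first `n - k` positions and the last `k` positions) if it is strictly increasing on each block. -/
def BlockIncreasing {n : ℕ} (k : ℕ) (α : Equiv.Perm (Fin n)) : Prop :=
  (∀ i j : Fin n, i < j → (j : ℕ) < n - k → α i < α j) ∧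
  (∀ i j : Fin n, i < j → n - k ≤ (i : ℕ) → α i < α j)

/-- The block-diagonal permutation `β ⊕ γ` of `{0, …, n-1}` acting as `β` on the first `n - k`
positions and as `γ` on the last `k` positions. -/
def blockSum {n k : ℕ} (h : k ≤ n) (β : Equiv.Perm (Fin (n - k))) (γ : Equiv.Perm (Fin k)) :
    Equiv.Perm (Fin n) :=
  (finCongr (Nat.sub_add_cancel h)).permCongr
    (finSumFinEquiv.symm.trans ((Equiv.sumCongr β γ).trans finSumFinEquiv))

/-!
Split the pairs of positions according to the two blocks. Since `α` is increasing on each block,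
the inversions of `α ∘ (β ⊕ γ)` inside the first (second) block are exactly those of `β` (`γ`),
while `β ⊕ γ` only permutes the pairs straddling the two blocks among themselves, so these
contribute the same number as for `α`, which has no other inversions. Conversely the factorization
of `σ` is forced: `β⁻¹` and `γ⁻¹` must be the permutations sorting `σ` on the two blocks.
-/

open Equiv Function

theorem inversions_one {n : ℕ} : inversions (1 : Perm (Fin n)) = 0 := by
  rw [inversions, Finset.card_eq_zero, Finset.filter_eq_empty_iff]
  exact fun p _ hp => lt_asymm hp.1 hp.2

section Crossings

variable {X Y X' Y' A B A' B' : Type*} [LinearOrder X] [LinearOrder Y] [LinearOrder X']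
  [LinearOrder Y'] [Fintype A] [Fintype B] [Fintype A'] [Fintype B']

def crossings (σ : X → Y) (u : A → X) (v : B → X) : ℕ :=
  ∑ a, ∑ b, if u a < v b ∧ σ (v b) < σ (u a) then 1 else 0

theorem inversions_eq_crossings {n : ℕ} (σ : Perm (Fin n)) : inversions σ = crossings σ id id := by
  rw [inversions, Finset.card_filter, Fintype.sum_prod_type]
  rfl

theorem crossings_congr {σ : X → Y} {u : A → X} {v : B → X} {σ' : X' → Y'} {u' : A → X'}
    {v' : B → X'}
    (h : ∀ a b, (u a < v b ↔ u' a < v' b) ∧ (σ (v b) < σ (u a) ↔ σ' (v' b) < σ' (u' a))) :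
    crossings σ u v = crossings σ' u' v' := by
  unfold crossings
  exact Finset.sum_congr rfl fun a _ => Finset.sum_congr rfl fun b _ => by
    simp only [(h a b).1, (h a b).2]

theorem crossings_comp_equiv (σ : X → Y) (u : A → X) (v : B → X) (e : A' ≃ A) (e' : B' ≃ B) :
    crossings σ (u ∘ e) (v ∘ e') = crossings σ u v :=
  Fintype.sum_equiv e _ _ fun _ => Fintype.sum_equiv e' _ _ fun _ => rfl

theorem crossings_sumElim_left (σ : X → Y) (u : A → X) (u' : A' → X) (v : B → X) :
    crossings σ (Sum.elim u u') v = crossings σ u v + crossings σ u' v :=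
  Fintype.sum_sum_type _

theorem crossings_sumElim_right (σ : X → Y) (u : A → X) (v : B → X) (v' : B' → X) :
    crossings σ u (Sum.elim v v') = crossings σ u v + crossings σ u v' := by
  simp only [crossings, Fintype.sum_sum_type, Sum.elim_inl, Sum.elim_inr]
  exact Finset.sum_add_distrib

theorem crossings_eq_zero (σ : X → Y) {u : A → X} {v : B → X} (h : ∀ a b, v b ≤ u a) :
    crossings σ u v = 0 := by
  simp [crossings, fun a b => (h a b).not_gt]

end Crossings

theorem Tuple.sort_eq_of_strictMono {m : ℕ} {X : Type*} [LinearOrder X] {f : Fin m → X}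
    {τ : Perm (Fin m)} (hf : StrictMono (f ∘ τ)) : Tuple.sort f = τ :=
  (Tuple.eq_sort_iff.2 ⟨hf.monotone, fun _ _ hij hfij => absurd hfij (hf hij).ne⟩).symm

theorem Tuple.strictMono_comp_sort {m : ℕ} {X : Type*} [LinearOrder X] {f : Fin m → X}
    (hf : Injective f) : StrictMono (f ∘ Tuple.sort f) :=
  (Tuple.monotone_sort f).strictMono_of_injective (hf.comp (Tuple.sort f).injective)

section Blocks

variable {n k : ℕ} (h : k ≤ n)

def blockEquiv : Fin (n - k) ⊕ Fin k ≃ Fin n :=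
  finSumFinEquiv.trans (finCongr (Nat.sub_add_cancel h))

@[simp]
theorem val_blockEquiv_inl (i : Fin (n - k)) : (blockEquiv h (.inl i) : ℕ) = i := by
  simp [blockEquiv]

@[simp]
theorem val_blockEquiv_inr (j : Fin k) : (blockEquiv h (.inr j) : ℕ) = n - k + j := by
  simp [blockEquiv]

theorem strictMono_blockEquiv_inl : StrictMono (blockEquiv h ∘ Sum.inl) :=
  fun i j hij => Fin.lt_def.2 (by simpa using hij)

theorem strictMono_blockEquiv_inr : StrictMono (blockEquiv h ∘ Sum.inr) :=
  fun i j hij => Fin.lt_def.2 (by simpa using hij)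

theorem blockEquiv_inl_lt_inr (i : Fin (n - k)) (j : Fin k) :
    blockEquiv h (.inl i) < blockEquiv h (.inr j) :=
  Fin.lt_def.2 (by simp; omega)

theorem blockSum_apply_blockEquiv (β : Perm (Fin (n - k))) (γ : Perm (Fin k))
    (x : Fin (n - k) ⊕ Fin k) : blockSum h β γ (blockEquiv h x) = blockEquiv h (Sum.map β γ x) := by
  simp [blockSum, blockEquiv, Equiv.permCongr_apply]

theorem blockSum_one : blockSum h 1 1 = 1 := by
  ext x
  obtain ⟨y, rfl⟩ := (blockEquiv h).surjective x
  rcases y with i | j <;> simp [blockSum_apply_blockEquiv]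

theorem blockSum_inv (β : Perm (Fin (n - k))) (γ : Perm (Fin k)) :
    (blockSum h β γ)⁻¹ = blockSum h β⁻¹ γ⁻¹ := by
  rw [inv_eq_iff_mul_eq_one]
  ext x
  obtain ⟨y, rfl⟩ := (blockEquiv h).surjective x
  rcases y with i | j <;> simp [blockSum_apply_blockEquiv]

theorem mul_blockSum_comp_inl (σ : Perm (Fin n)) (β : Perm (Fin (n - k))) (γ : Perm (Fin k)) :
    ⇑(σ * blockSum h β γ) ∘ blockEquiv h ∘ Sum.inl = σ ∘ blockEquiv h ∘ Sum.inl ∘ β := by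
  ext i
  simp [blockSum_apply_blockEquiv]

theorem mul_blockSum_comp_inr (σ : Perm (Fin n)) (β : Perm (Fin (n - k))) (γ : Perm (Fin k)) :
    ⇑(σ * blockSum h β γ) ∘ blockEquiv h ∘ Sum.inr = σ ∘ blockEquiv h ∘ Sum.inr ∘ γ := by
  ext j
  simp [blockSum_apply_blockEquiv]

theorem blockIncreasing_iff {α : Perm (Fin n)} :
    BlockIncreasing k α ↔
      StrictMono (α ∘ blockEquiv h ∘ Sum.inl) ∧ StrictMono (α ∘ blockEquiv h ∘ Sum.inr) := by
  constructor
  · rintro ⟨hl, hr⟩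
    exact ⟨fun i j hij => hl _ _ (strictMono_blockEquiv_inl h hij) (by simp),
      fun i j hij => hr _ _ (strictMono_blockEquiv_inr h hij) (by simp)⟩
  · rintro ⟨hl, hr⟩
    refine ⟨fun i j hij hj => ?_, fun i j hij hi => ?_⟩
    · obtain ⟨i, rfl⟩ : ∃ i', blockEquiv h (.inl i') = i := ⟨⟨i, by omega⟩, Fin.ext (by simp)⟩
      obtain ⟨j, rfl⟩ : ∃ j', blockEquiv h (.inl j') = j := ⟨⟨j, hj⟩, Fin.ext (by simp)⟩
      exact hl ((strictMono_blockEquiv_inl h).lt_iff_lt.1 hij)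
    · obtain ⟨i, rfl⟩ : ∃ i', blockEquiv h (.inr i') = i :=
        ⟨⟨i - (n - k), by omega⟩, Fin.ext (by simp; omega)⟩
      obtain ⟨j, rfl⟩ : ∃ j', blockEquiv h (.inr j') = j :=
        ⟨⟨j - (n - k), by omega⟩, Fin.ext (by simp; omega)⟩
      exact hr ((strictMono_blockEquiv_inr h).lt_iff_lt.1 hij)

theorem inversions_eq_crossings_blocks (σ : Perm (Fin n)) :
    inversions σ = crossings σ (blockEquiv h ∘ Sum.inl) (blockEquiv h ∘ Sum.inl) +
      crossings σ (blockEquiv h ∘ Sum.inl) (blockEquiv h ∘ Sum.inr) +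
      crossings σ (blockEquiv h ∘ Sum.inr) (blockEquiv h ∘ Sum.inr) := by
  conv_lhs => rw [inversions_eq_crossings,
    ← crossings_comp_equiv σ id id (blockEquiv h) (blockEquiv h), id_comp,
    ← Sum.elim_comp_inl_inr (blockEquiv h), crossings_sumElim_left, crossings_sumElim_right,
    crossings_sumElim_right]
  rw [crossings_eq_zero (u := blockEquiv h ∘ Sum.inr) (v := blockEquiv h ∘ Sum.inl) σ
    fun j i => (blockEquiv_inl_lt_inr h i j).le]
  ring

end Blocks

section Decomposition

variable {n k : ℕ} (h : k ≤ n)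

theorem inversions_mul_blockSum {α : Perm (Fin n)} (hα : BlockIncreasing k α)
    (β : Perm (Fin (n - k))) (γ : Perm (Fin k)) :
    inversions (α * blockSum h β γ) =
      inversions β + crossings α (blockEquiv h ∘ Sum.inl) (blockEquiv h ∘ Sum.inr) +
        inversions γ := by
  obtain ⟨hl, hr⟩ := (blockIncreasing_iff h).1 hα
  rw [inversions_eq_crossings_blocks h, inversions_eq_crossings β, inversions_eq_crossings γ]
  congr 1
  · congr 1
    · exact crossings_congr fun a b => ⟨(strictMono_blockEquiv_inl h).lt_iff_lt, by
        simpa [blockSum_apply_blockEquiv] using hl.lt_iff_lt⟩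
    · rw [← crossings_comp_equiv α _ _ β γ]
      exact crossings_congr fun a b =>
        ⟨iff_of_true (blockEquiv_inl_lt_inr h _ _) (blockEquiv_inl_lt_inr h _ _), by
          simp [blockSum_apply_blockEquiv]⟩
  · exact crossings_congr fun a b => ⟨(strictMono_blockEquiv_inr h).lt_iff_lt, by
      simpa [blockSum_apply_blockEquiv] using hr.lt_iff_lt⟩

theorem inversions_eq_crossings_of_blockIncreasing {α : Perm (Fin n)} (hα : BlockIncreasing k α) :
    inversions α = crossings α (blockEquiv h ∘ Sum.inl) (blockEquiv h ∘ Sum.inr) := by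
  simpa [blockSum_one, inversions_one] using inversions_mul_blockSum h hα 1 1

def blockFactors (σ : Perm (Fin n)) : Perm (Fin (n - k)) × Perm (Fin k) :=
  ((Tuple.sort (σ ∘ blockEquiv h ∘ Sum.inl))⁻¹, (Tuple.sort (σ ∘ blockEquiv h ∘ Sum.inr))⁻¹)

theorem blockIncreasing_mul_inv_blockSum_blockFactors (σ : Perm (Fin n)) :
    BlockIncreasing k (σ * (blockSum h (blockFactors h σ).1 (blockFactors h σ).2)⁻¹) := by
  rw [blockIncreasing_iff h, blockSum_inv, mul_blockSum_comp_inl, mul_blockSum_comp_inr]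
  simp only [blockFactors, inv_inv]
  have hσe : Injective (σ ∘ blockEquiv h) := σ.injective.comp (blockEquiv h).injective
  exact ⟨Tuple.strictMono_comp_sort (hσe.comp Sum.inl_injective),
    Tuple.strictMono_comp_sort (hσe.comp Sum.inr_injective)⟩

theorem blockFactors_mul_blockSum {α : Perm (Fin n)} (hα : BlockIncreasing k α)
    (β : Perm (Fin (n - k))) (γ : Perm (Fin k)) :
    blockFactors h (α * blockSum h β γ) = (β, γ) := by
  obtain ⟨hl, hr⟩ := (blockIncreasing_iff h).1 hα
  rw [blockFactors, mul_blockSum_comp_inl, mul_blockSum_comp_inr,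
    Tuple.sort_eq_of_strictMono (τ := β⁻¹) fun i j hij => by simpa using hl hij,
    Tuple.sort_eq_of_strictMono (τ := γ⁻¹) fun i j hij => by simpa using hr hij, inv_inv, inv_inv]

end Decomposition

theorem blockIncreasing_coset_decomposition (n k : ℕ) (h : k ≤ n) :
    Function.Bijective
      (fun t : {α : Equiv.Perm (Fin n) // BlockIncreasing k α} ×
          Equiv.Perm (Fin (n - k)) × Equiv.Perm (Fin k) =>
        (t.1 : Equiv.Perm (Fin n)) * blockSum h t.2.1 t.2.2) ∧
    ∀ (α : Equiv.Perm (Fin n)) (β : Equiv.Perm (Fin (n - k))) (γ : Equiv.Perm (Fin k)),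
      BlockIncreasing k α →
        inversions (α * blockSum h β γ) = inversions α + inversions β + inversions γ := by
  refine ⟨?_, fun α β γ hα => ?_⟩
  · refine bijective_iff_has_inverse.2
      ⟨fun σ => (⟨_, blockIncreasing_mul_inv_blockSum_blockFactors h σ⟩, blockFactors h σ), ?_,
        fun σ => inv_mul_cancel_right _ _⟩
    rintro ⟨⟨α, hα⟩, β, γ⟩
    simp only [blockFactors_mul_blockSum h hα, mul_inv_cancel_right]
  · rw [inversions_mul_blockSum h hα, inversions_eq_crossings_of_blockIncreasing h hα]
    ring
end

section
/- Let q be a real number with -1 < q < 1 and let n ≥ 1. Then the real matrix A indexed by the symmetric group S_n, with entries A(σ,τ) = q^{inv(σ τ⁻¹)}, is symmetric and positive definite. -/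
open Finset Matrix
open scoped ComplexOrder Kronecker

universe u

namespace Matrix

variable {𝕜 β : Type*} [RCLike 𝕜]

def kroneckerPow {R : Type*} [CommMonoid R] (K : Matrix β β R) (ι : Type*) [Fintype ι] :
    Matrix (ι → β) (ι → β) R :=
  of fun u v => ∏ i, K (u i) (v i)

theorem PosDef.kroneckerPow [Finite β] {K : Matrix β β 𝕜} (hK : K.PosDef) (ι : Type u)
    [Fintype ι] : (K.kroneckerPow ι).PosDef := by
  refine Fintype.induction_empty_option (P := fun ι _ => (K.kroneckerPow ι).PosDef)
    ?_ ?_ (fun α _ ih => ?_) ι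
  · intro α ι _ e ih
    let _ : Fintype α := Fintype.ofEquiv ι e.symm
    have hsub : K.kroneckerPow ι = (K.kroneckerPow α).submatrix (· ∘ e) (· ∘ e) := by
      ext u v
      exact (Fintype.prod_equiv e _ _ fun _ => rfl).symm
    rw [hsub]
    exact ih.submatrix fun u v h => funext fun i => by simpa using congrFun h (e.symm i)
  · classical
    convert PosDef.one (n := PEmpty → β) (R := 𝕜)
    ext u v
    simp [Matrix.kroneckerPow, Subsingleton.elim u v, one_apply]
  · have hsub : K.kroneckerPow (Option α) =
        (K ⊗ₖ K.kroneckerPow α).submatrix Equiv.piOptionEquivProd Equiv.piOptionEquivProd := by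
      ext u v
      simp [Matrix.kroneckerPow, Fintype.prod_option]
    rw [hsub]
    exact (hK.kronecker ih).submatrix Equiv.piOptionEquivProd.injective

end Matrix

def flipKernel {R : Type*} [One R] (q : R) : Matrix Bool Bool R :=
  of fun a b => if a = b then 1 else q

theorem posDef_flipKernel {q : ℝ} (hq : |q| < 1) : (flipKernel q).PosDef := by
  rw [posDef_iff_dotProduct_mulVec]
  refine ⟨?_, fun x hx => ?_⟩
  · ext a b
    simp [flipKernel, eq_comm]
  · have hS : 0 < x false ^ 2 + x true ^ 2 := by
      by_contra! h
      refine hx (funext fun b => ?_)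
      show x b = 0
      cases b <;> nlinarith [sq_nonneg (x false), sq_nonneg (x true)]
    have hq2 : 0 < 1 - q ^ 2 := sub_pos.mpr ((sq_lt_one_iff_abs_lt_one q).mpr hq)
    simp only [dotProduct, mulVec, flipKernel, of_apply, Fintype.sum_bool, Pi.star_apply,
      star_trivial, Bool.true_eq_false, Bool.false_eq_true, ↓reduceIte]
    -- `a² + 2qab + b² = (a + qb)² + (1 - q²) b² = (b + qa)² + (1 - q²) a²`
    nlinarith [sq_nonneg (x false + q * x true), sq_nonneg (x true + q * x false), mul_pos hq2 hS]

theorem kroneckerPow_flipKernel_apply {R : Type*} [CommMonoid R] (q : R) (ι : Type*) [Fintype ι]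
    (u v : ι → Bool) : (flipKernel q).kroneckerPow ι u v = q ^ hammingDist u v := by
  simp [kroneckerPow, flipKernel, hammingDist, prod_ite]

theorem two_mul_card_filter_lt_eq_card {α γ : Type*} [LinearOrder γ] (s : Finset (α × α))
    (h : α → γ) (hs : ∀ z ∈ s, z.swap ∈ s) (hh : ∀ z ∈ s, h z.1 ≠ h z.2) :
    2 * #{z ∈ s | h z.1 < h z.2} = #s := by
  have hswap : #{z ∈ s | ¬h z.1 < h z.2} = #{z ∈ s | h z.1 < h z.2} := by
    refine card_nbij' Prod.swap Prod.swap ?_ ?_ (fun _ _ => rfl) (fun _ _ => rfl)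
    · intro z hz
      simp only [coe_filter, Set.mem_ofPred_eq] at hz ⊢
      exact ⟨hs z hz.1, lt_of_le_of_ne (not_lt.mp hz.2) (hh z hz.1).symm⟩
    · intro z hz
      simp only [coe_filter, Set.mem_ofPred_eq] at hz ⊢
      exact ⟨hs z hz.1, not_lt.mpr hz.2.le⟩
  have := card_filter_add_card_filter_not (s := s) (fun z => h z.1 < h z.2)
  omega

section DiscordantPairs

variable {α β : Type*} [Fintype α] [LinearOrder β]

def discordantPairs (f g : α → β) : Finset (α × α) :=
  {z | f z.1 < f z.2 ∧ g z.2 < g z.1 ∨ f z.2 < f z.1 ∧ g z.1 < g z.2}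

theorem two_mul_card_discordantPairs_filter_lt (f g : α → β) {γ : Type*} [LinearOrder γ]
    {h : α → γ} (hh : Function.Injective h) :
    2 * #{z ∈ discordantPairs f g | h z.1 < h z.2} = #(discordantPairs f g) := by
  refine two_mul_card_filter_lt_eq_card _ h (fun z hz => ?_) (fun z hz => hh.ne ?_)
  · simp only [discordantPairs, mem_filter, mem_univ, true_and, Prod.fst_swap,
      Prod.snd_swap] at hz ⊢
    tauto
  · rintro h12
    simp [discordantPairs, h12] at hz

end DiscordantPairs

section Inversions

variable {n : ℕ}

def inversionIndicator (σ : Equiv.Perm (Fin n)) (p : Fin n × Fin n) : Bool :=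
  decide (p.1 < p.2 ∧ σ p.2 < σ p.1)

theorem inversions_mul_inv_eq_card_discordantPairs (σ τ : Equiv.Perm (Fin n)) :
    inversions (σ * τ⁻¹) = #{z ∈ discordantPairs σ τ | τ z.1 < τ z.2} := by
  refine card_equiv (τ.symm.prodCongr τ.symm) fun z => ?_
  simp only [discordantPairs, mem_filter, mem_univ, true_and]
  simp only [Equiv.prodCongr_apply, Prod.map_fst, Prod.map_snd, Equiv.Perm.mul_apply,
    Equiv.Perm.inv_def, Equiv.apply_symm_apply]
  constructor
  · rintro ⟨h12, hσ⟩
    exact ⟨Or.inr ⟨hσ, h12⟩, h12⟩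
  · rintro ⟨h | h, h12⟩
    · exact absurd h12 (lt_asymm h.2)
    · exact ⟨h12, h.1⟩

theorem hammingDist_inversionIndicator_eq_card_discordantPairs (σ τ : Equiv.Perm (Fin n)) :
    hammingDist (inversionIndicator σ) (inversionIndicator τ)
      = #{z ∈ discordantPairs σ τ | z.1 < z.2} := by
  unfold hammingDist
  congr 1
  ext z
  simp only [inversionIndicator, discordantPairs, mem_filter, mem_univ, true_and, ne_eq]
  rcases lt_or_ge z.1 z.2 with h12 | h21
  · rcases lt_or_gt_of_ne (σ.injective.ne h12.ne) with hσ | hσ <;>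
    rcases lt_or_gt_of_ne (τ.injective.ne h12.ne) with hτ | hτ <;>
    simp [h12, hσ, hτ, hσ.not_gt, hτ.not_gt]
  · simp [h21.not_gt]

/-- Both sides count each discordant pair of `σ, τ` once: oriented by `τ` on the left, by the
order of `Fin n` on the right. -/
theorem inversions_mul_inv_eq_hammingDist (σ τ : Equiv.Perm (Fin n)) :
    inversions (σ * τ⁻¹) = hammingDist (inversionIndicator σ) (inversionIndicator τ) := by
  have hτ := two_mul_card_discordantPairs_filter_lt σ τ τ.injective
  have hid := two_mul_card_discordantPairs_filter_lt σ τ (γ := Fin n) Function.injective_id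
  rw [inversions_mul_inv_eq_card_discordantPairs,
    hammingDist_inversionIndicator_eq_card_discordantPairs]
  simp only [id] at hid
  omega

theorem eq_one_of_inversions_eq_zero {σ : Equiv.Perm (Fin n)} (h : inversions σ = 0) :
    σ = 1 := by
  have hmono : StrictMono σ := fun i j hij => by
    have hnot : ¬σ j < σ i := by
      rw [inversions, card_eq_zero, filter_eq_empty_iff] at h
      exact fun hji => h (mem_univ (i, j)) ⟨hij, hji⟩
    exact lt_of_le_of_ne (not_lt.mp hnot) (σ.injective.ne hij.ne)
  exact Equiv.ext fun i => congrFun hmono.eq_id i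

theorem inversionIndicator_injective : Function.Injective (inversionIndicator (n := n)) := by
  intro σ τ h
  have hinv := inversions_mul_inv_eq_hammingDist σ τ
  rw [h, hammingDist_self] at hinv
  exact mul_inv_eq_one.mp (eq_one_of_inversions_eq_zero hinv)

end Inversions

theorem q_inversion_matrix_posDef_general (q : ℝ) (hq : -1 < q ∧ q < 1) (n : ℕ)
    (A : Matrix (Equiv.Perm (Fin n)) (Equiv.Perm (Fin n)) ℝ)
    (hA : ∀ σ τ : Equiv.Perm (Fin n), A σ τ = q ^ inversions (σ * τ⁻¹)) :
    A.IsSymm ∧ A.PosDef := by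
  have hA_eq : A = ((flipKernel q).kroneckerPow (Fin n × Fin n)).submatrix
      inversionIndicator inversionIndicator := by
    ext σ τ
    rw [hA, inversions_mul_inv_eq_hammingDist, submatrix_apply, kroneckerPow_flipKernel_apply]
  have hpos : A.PosDef := hA_eq ▸
    ((posDef_flipKernel (abs_lt.mpr hq)).kroneckerPow _).submatrix inversionIndicator_injective
  exact ⟨isHermitian_iff_isSymm.mp hpos.isHermitian, hpos⟩

theorem q_inversion_matrix_posDef (q : ℝ) (hq : -1 < q ∧ q < 1) (n : ℕ) (hn : 1 ≤ n)
    (A : Matrix (Equiv.Perm (Fin n)) (Equiv.Perm (Fin n)) ℝ)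
    (hA : ∀ σ τ : Equiv.Perm (Fin n), A σ τ = q ^ inversions (σ * τ⁻¹)) :
    A.IsSymm ∧ A.PosDef :=
  q_inversion_matrix_posDef_general q hq n A hA
end
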